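/- arXiv:math/0406036 — 2 statements merged into one kernel-verified Lean document; each statement's English description precedes it below -/
import Mathlib

section
/- Let H be a Hilbert space and let V₁, V₂ : K → H be isometries with orthogonal ranges, and let V : K → H be an isometry. For 0 < r < 1/√2, set T_i = V_i + rV for i = 1,2 and δ = 1 − r√2 > 0. Then for all ξ, η ∈ K, ‖T₁ξ − T₂η‖ ≥ δ·‖(ξ,η)‖, where ‖(ξ,η)‖ = (‖ξ‖² + ‖η‖²)^{1/2}. Consequently, Ran(T₁) ∩ Ran(T₂) = {0} and Ran(T₁) + Ran(T₂) is closed. -/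
open Set
open scoped InnerProductSpace

theorem Real.add_le_sqrt_two_mul_sqrt_sq_add_sq (a b : ℝ) : a + b ≤ √2 * √(a ^ 2 + b ^ 2) := by
  rw [← Real.sqrt_mul zero_le_two]
  exact Real.le_sqrt_of_sq_le (by nlinarith [sq_nonneg (a - b)])

theorem Prod.norm_mk_le_sqrt {E F : Type*} [SeminormedAddCommGroup E] [SeminormedAddCommGroup F]
    (x : E) (y : F) : ‖(x, y)‖ ≤ √(‖x‖ ^ 2 + ‖y‖ ^ 2) :=
  max_le (Real.le_sqrt_of_sq_le (le_add_of_nonneg_right (sq_nonneg _)))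
    (Real.le_sqrt_of_sq_le (le_add_of_nonneg_left (sq_nonneg _)))

theorem norm_sub_eq_sqrt_of_inner_eq_zero {𝕜 E : Type*} [RCLike 𝕜] [NormedAddCommGroup E]
    [InnerProductSpace 𝕜 E] {x y : E} (h : ⟪x, y⟫_𝕜 = 0) :
    ‖x - y‖ = √(‖x‖ ^ 2 + ‖y‖ ^ 2) := by
  rw [← Real.sqrt_sq (norm_nonneg (x - y)), @norm_sub_sq 𝕜, h, map_zero, mul_zero, sub_zero]

section PerturbedIsometries

variable {𝕜 E F : Type*} [RCLike 𝕜] [NormedAddCommGroup E] [InnerProductSpace 𝕜 E]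
  [NormedAddCommGroup F] [InnerProductSpace 𝕜 F]

/-- The difference splits as `(V₁ ξ - V₂ η) + c • V (ξ - η)`: the first term has norm exactly
`√(‖ξ‖² + ‖η‖²)` by orthogonality, the second at most `‖c‖ (‖ξ‖ + ‖η‖) ≤ ‖c‖ √2 √(‖ξ‖² + ‖η‖²)`. -/
theorem one_sub_norm_mul_sqrt_two_mul_le_norm_sub {V₁ V₂ V : E →L[𝕜] F}
    (h₁ : ∀ x, ‖V₁ x‖ = ‖x‖) (h₂ : ∀ x, ‖V₂ x‖ = ‖x‖) (hV : ∀ x, ‖V x‖ = ‖x‖)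
    (horth : ∀ ξ η, ⟪V₁ ξ, V₂ η⟫_𝕜 = 0) (c : 𝕜) (ξ η : E) :
    (1 - ‖c‖ * √2) * √(‖ξ‖ ^ 2 + ‖η‖ ^ 2) ≤ ‖(V₁ + c • V) ξ - (V₂ + c • V) η‖ := by
  have hsplit : (V₁ + c • V) ξ - (V₂ + c • V) η = (V₁ ξ - V₂ η) + c • V (ξ - η) := by
    simp only [add_apply, smul_apply, map_sub]
    module
  have hdiff : ‖ξ - η‖ ≤ √2 * √(‖ξ‖ ^ 2 + ‖η‖ ^ 2) :=
    (norm_sub_le ξ η).trans (Real.add_le_sqrt_two_mul_sqrt_sq_add_sq _ _)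
  calc (1 - ‖c‖ * √2) * √(‖ξ‖ ^ 2 + ‖η‖ ^ 2)
      = √(‖ξ‖ ^ 2 + ‖η‖ ^ 2) - ‖c‖ * (√2 * √(‖ξ‖ ^ 2 + ‖η‖ ^ 2)) := by ring
    _ ≤ ‖V₁ ξ - V₂ η‖ - ‖c • V (ξ - η)‖ := by
      rw [norm_sub_eq_sqrt_of_inner_eq_zero (horth ξ η), h₁, h₂, norm_smul, hV]
      gcongr
    _ ≤ ‖(V₁ + c • V) ξ - (V₂ + c • V) η‖ := by
      rw [hsplit]
      exact norm_sub_le_norm_add _ _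

end PerturbedIsometries

section BoundedBelow

variable {R E F : Type*} [Semiring R] [NormedAddCommGroup E] [Module R E]
  [NormedAddCommGroup F] [Module R F] {c : ℝ}

theorem ContinuousLinearMap.isClosed_range_of_mul_norm_le [CompleteSpace E] (f : E →L[R] F)
    (hc : 0 < c) (h : ∀ x, c * ‖x‖ ≤ ‖f x‖) : IsClosed (range f) := by
  obtain ⟨K, hK⟩ := antilipschitzWith_iff_exists_mul_le_norm.2 ⟨c, hc, h⟩
  exact hK.isClosed_range f.uniformContinuous

variable {T₁ T₂ : E →L[R] F}

theorem eq_zero_of_mem_range_of_mem_range_of_mul_norm_le (hc : 0 < c)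
    (h : ∀ ξ η, c * ‖(ξ, η)‖ ≤ ‖T₁ ξ - T₂ η‖) {x : F} (hx₁ : x ∈ range T₁)
    (hx₂ : x ∈ range T₂) : x = 0 := by
  obtain ⟨ξ, rfl⟩ := hx₁
  obtain ⟨η, hη⟩ := hx₂
  have : c * ‖(ξ, η)‖ ≤ 0 := by simpa [hη] using h ξ η
  have hξη : (ξ, η) = 0 := norm_le_zero_iff.1 (nonpos_of_mul_nonpos_right this hc)
  rw [(Prod.mk_eq_zero.1 hξη).1, map_zero]

theorem isClosed_setOf_add_of_mul_norm_le [CompleteSpace E] (hc : 0 < c)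
    (h : ∀ ξ η, c * ‖(ξ, η)‖ ≤ ‖T₁ ξ - T₂ η‖) :
    IsClosed {x : F | ∃ a b : E, x = T₁ a + T₂ b} := by
  have hset : {x : F | ∃ a b : E, x = T₁ a + T₂ b} = range (T₁.coprod T₂) := by
    ext x
    simp [eq_comm]
  rw [hset]
  refine (T₁.coprod T₂).isClosed_range_of_mul_norm_le hc fun ⟨a, b⟩ ↦ ?_
  simpa using h a (-b)

end BoundedBelow

theorem stmt_3_general {K H : Type*} [NormedAddCommGroup K] [InnerProductSpace ℂ K]
    [NormedAddCommGroup H] [InnerProductSpace ℂ H] [CompleteSpace K]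
    (V₁ V₂ V : K →L[ℂ] H)
    (h1 : ∀ x, ‖V₁ x‖ = ‖x‖) (h2 : ∀ x, ‖V₂ x‖ = ‖x‖) (hV : ∀ x, ‖V x‖ = ‖x‖)
    (horth : ∀ ξ η : K, (inner ℂ (V₁ ξ) (V₂ η) : ℂ) = 0)
    (r : ℝ) (hr0 : 0 < r) (hr : r < 1 / Real.sqrt 2) :
    (∀ ξ η : K, (1 - r * Real.sqrt 2) * Real.sqrt (‖ξ‖ ^ 2 + ‖η‖ ^ 2) ≤
        ‖(V₁ + (r : ℂ) • V) ξ - (V₂ + (r : ℂ) • V) η‖) ∧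
    (∀ x : H, x ∈ Set.range (V₁ + (r : ℂ) • V) → x ∈ Set.range (V₂ + (r : ℂ) • V) → x = 0) ∧
    IsClosed {x : H | ∃ a b : K, x = (V₁ + (r : ℂ) • V) a + (V₂ + (r : ℂ) • V) b} := by
  have hδ : 0 < 1 - r * √2 := by
    have := (lt_div_iff₀ (by positivity : (0 : ℝ) < √2)).1 hr
    linarith
  have hnorm : ‖(r : ℂ)‖ = r := Complex.norm_of_nonneg hr0.le
  have key : ∀ ξ η : K, (1 - r * √2) * √(‖ξ‖ ^ 2 + ‖η‖ ^ 2) ≤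
      ‖(V₁ + (r : ℂ) • V) ξ - (V₂ + (r : ℂ) • V) η‖ := by
    simpa only [hnorm] using one_sub_norm_mul_sqrt_two_mul_le_norm_sub h1 h2 hV horth (r : ℂ)
  have key_prod : ∀ ξ η : K, (1 - r * √2) * ‖(ξ, η)‖ ≤
      ‖(V₁ + (r : ℂ) • V) ξ - (V₂ + (r : ℂ) • V) η‖ := fun ξ η ↦
    (mul_le_mul_of_nonneg_left (Prod.norm_mk_le_sqrt ξ η) hδ.le).trans (key ξ η)
  exact ⟨key, fun _ ↦ eq_zero_of_mem_range_of_mem_range_of_mul_norm_le hδ key_prod,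
    isClosed_setOf_add_of_mul_norm_le hδ key_prod⟩

/-- Let `V₁, V₂ : K → H` be isometries with orthogonal ranges and `V : K → H` an isometry.
For `0 < r < 1/√2`, set `Tᵢ = Vᵢ + r•V` and `δ = 1 - r√2 > 0`.  Then
`‖T₁ξ - T₂η‖ ≥ δ·(‖ξ‖² + ‖η‖²)^{1/2}` for all `ξ η`; consequently
`Ran T₁ ∩ Ran T₂ = {0}` and `Ran T₁ + Ran T₂` is closed. -/
theorem stmt_3 {K H : Type*} [NormedAddCommGroup K] [InnerProductSpace ℂ K]
    [NormedAddCommGroup H] [InnerProductSpace ℂ H] [CompleteSpace K] [CompleteSpace H]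
    (V₁ V₂ V : K →L[ℂ] H)
    (h1 : ∀ x, ‖V₁ x‖ = ‖x‖) (h2 : ∀ x, ‖V₂ x‖ = ‖x‖) (hV : ∀ x, ‖V x‖ = ‖x‖)
    (horth : ∀ ξ η : K, (inner ℂ (V₁ ξ) (V₂ η) : ℂ) = 0)
    (r : ℝ) (hr0 : 0 < r) (hr : r < 1 / Real.sqrt 2) :
    (∀ ξ η : K, (1 - r * Real.sqrt 2) * Real.sqrt (‖ξ‖ ^ 2 + ‖η‖ ^ 2) ≤
        ‖(V₁ + (r : ℂ) • V) ξ - (V₂ + (r : ℂ) • V) η‖) ∧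
    (∀ x : H, x ∈ Set.range (V₁ + (r : ℂ) • V) → x ∈ Set.range (V₂ + (r : ℂ) • V) → x = 0) ∧
    IsClosed {x : H | ∃ a b : K, x = (V₁ + (r : ℂ) • V) a + (V₂ + (r : ℂ) • V) b} :=
  stmt_3_general V₁ V₂ V h1 h2 hV horth r hr0 hr
end

section
/- Let S₁,…,S_n be isometries on a Hilbert space H with pairwise orthogonal ranges, and suppose X : ℓ²(F_n⁺) → H is a bounded operator satisfying S_iX = XL_i for 1 ≤ i ≤ n, where L_i are the left creation operators on the full Fock space ℓ²(F_n⁺). If X is bounded below (‖Xξ‖ ≥ c‖ξ‖ for some c > 0 and all ξ), then ⋂_{k≥1} Σ_{|w|=k} Ran(S_w restricted to Ran X) = {0}, i.e., the Cuntz part of the restriction of the S_i to the closure of Ran X vanishes. -/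
/-!
Bounded below, `X` is a closed embedding, and the intertwining relation lifts to words:
`S_w X = X L_w`. Hence the closed span of the `S_w (Ran X)` with `|w| = k` is the image under
`X` of the closed span of the basis vectors `ξ_u` with `|u| ≥ k`. A vector in all of these
images is `X ξ` for a single `ξ` (by injectivity) that is orthogonal to every `ξ_u`, so `ξ = 0`.
-/

open scoped ContinuousLinearMap

/-- For a word `w = i₁…i_k` in the free monoid, `wordOp S w = S_{i₁} ⋯ S_{i_k}`. -/
noncomputable def wordOp {H : Type*} [NormedAddCommGroup H] [InnerProductSpace ℂ H]
    {n : ℕ} (S : Fin n → H →L[ℂ] H) (w : FreeMonoid (Fin n)) : H →L[ℂ] H :=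
  ((FreeMonoid.toList w).map S).prod

open Submodule

section WordOp

variable {H K : Type*} [NormedAddCommGroup H] [InnerProductSpace ℂ H]
  [NormedAddCommGroup K] [InnerProductSpace ℂ K] {n : ℕ}

@[simp]
theorem wordOp_of_mul (S : Fin n → H →L[ℂ] H) (i : Fin n) (w : FreeMonoid (Fin n)) :
    wordOp S (FreeMonoid.of i * w) = S i * wordOp S w := by
  simp [wordOp]

theorem wordOp_apply_of_intertwine {S : Fin n → H →L[ℂ] H} {L : Fin n → K →L[ℂ] K}
    {X : K →L[ℂ] H} (hX : ∀ i, S i ∘L X = X ∘L L i) (w : FreeMonoid (Fin n)) (ξ : K) :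
    wordOp S w (X ξ) = X (wordOp L w ξ) := by
  induction w using FreeMonoid.inductionOn' generalizing ξ with
  | one => rfl
  | of_mul i w ih =>
    simp only [wordOp_of_mul, mul_apply_eq_comp, ih]
    exact congr($(hX i) _)

theorem wordOp_apply_of_shift {L : Fin n → K →L[ℂ] K} {e : FreeMonoid (Fin n) → K}
    (hL : ∀ i w, L i (e w) = e (FreeMonoid.of i * w)) (w v : FreeMonoid (Fin n)) :
    wordOp L w (e v) = e (w * v) := by
  induction w using FreeMonoid.inductionOn' generalizing v with
  | one => rfl
  | of_mul i w ih => rw [wordOp_of_mul, mul_apply_eq_comp, ih, hL, mul_assoc]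

end WordOp

section FockTail

variable {K : Type*} [NormedAddCommGroup K] [InnerProductSpace ℂ K] {n : ℕ}

/-- The subspace `Σ_{|w|=k} L_w ℓ²(F_n⁺)` of the Fock space. -/
noncomputable def fockTail (e : HilbertBasis (FreeMonoid (Fin n)) ℂ K) (k : ℕ) : Submodule ℂ K :=
  (span ℂ {ξ | ∃ u : FreeMonoid (Fin n), k ≤ u.length ∧ ξ = e u}).topologicalClosure

theorem wordOp_mem_fockTail {e : HilbertBasis (FreeMonoid (Fin n)) ℂ K} {L : Fin n → K →L[ℂ] K}
    (hL : ∀ i w, L i (e w) = e (FreeMonoid.of i * w)) (w : FreeMonoid (Fin n)) (ξ : K) :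
    wordOp L w ξ ∈ fockTail e w.length := by
  set P := (fockTail e w.length).comap (wordOp L w : K →ₗ[ℂ] K)
  have hP : IsClosed (P : Set K) :=
    (isClosed_topologicalClosure _).preimage (wordOp L w).continuous
  have hspan : span ℂ (Set.range e) ≤ P := by
    refine span_le.mpr ?_
    rintro _ ⟨v, rfl⟩
    refine le_topologicalClosure _ (subset_span ⟨w * v, ?_, wordOp_apply_of_shift hL w v⟩)
    simp
  exact topologicalClosure_minimal _ hspan hP (by simp [e.dense_span])

theorem fockTail_le_orthogonal (e : HilbertBasis (FreeMonoid (Fin n)) ℂ K)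
    {u : FreeMonoid (Fin n)} {k : ℕ} (hk : u.length < k) : fockTail e k ≤ (ℂ ∙ e u)ᗮ := by
  refine topologicalClosure_minimal _ (span_le.mpr ?_) (isClosed_orthogonal _)
  rintro _ ⟨v, hv, rfl⟩
  rw [SetLike.mem_coe, mem_orthogonal_singleton_iff_inner_right]
  exact e.orthonormal.2 (by rintro rfl; omega)

theorem eq_zero_of_forall_mem_fockTail (e : HilbertBasis (FreeMonoid (Fin n)) ℂ K) {ξ : K}
    (hξ : ∀ k, 1 ≤ k → ξ ∈ fockTail e k) : ξ = 0 := by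
  refine e.repr.injective (lp.ext (funext fun u => ?_))
  have hperp := fockTail_le_orthogonal e (Nat.lt_succ_self u.length) (hξ _ (Nat.le_add_left 1 _))
  rw [mem_orthogonal_singleton_iff_inner_right] at hperp
  simpa [e.repr_apply_apply] using hperp

end FockTail

theorem isClosedEmbedding_of_bounded_below {𝕜 E F : Type*} [NontriviallyNormedField 𝕜]
    [NormedAddCommGroup E] [NormedSpace 𝕜 E] [CompleteSpace E] [NormedAddCommGroup F]
    [NormedSpace 𝕜 F] {X : E →L[𝕜] F} {c : ℝ} (hc : 0 < c) (hbb : ∀ ξ, c * ‖ξ‖ ≤ ‖X ξ‖) :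
    Topology.IsClosedEmbedding X := by
  refine (X.antilipschitz_of_bound (K := (⟨c, hc.le⟩ : NNReal)⁻¹) fun ξ => ?_).isClosedEmbedding
    X.uniformContinuous
  change ‖ξ‖ ≤ c⁻¹ * ‖X ξ‖
  rw [le_inv_mul_iff₀ hc]
  exact hbb ξ

theorem closure_span_wordOp_subset_image {H K : Type*} [NormedAddCommGroup H]
    [InnerProductSpace ℂ H] [NormedAddCommGroup K] [InnerProductSpace ℂ K] {n : ℕ}
    {S : Fin n → H →L[ℂ] H} {e : HilbertBasis (FreeMonoid (Fin n)) ℂ K}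
    {L : Fin n → K →L[ℂ] K} (hL : ∀ i w, L i (e w) = e (FreeMonoid.of i * w))
    {X : K →L[ℂ] H} (hX : ∀ i, S i ∘L X = X ∘L L i) (hXc : Topology.IsClosedEmbedding X)
    (k : ℕ) :
    ((span ℂ {y : H | ∃ w : FreeMonoid (Fin n), w.length = k ∧
        ∃ z ∈ closure (Set.range X), y = wordOp S w z}).topologicalClosure : Set H) ⊆
      X '' fockTail e k := by
  have himage : X '' fockTail e k = (fockTail e k).map (X : K →ₗ[ℂ] H) := rfl
  rw [himage, SetLike.coe_subset_coe]
  refine topologicalClosure_minimal _ (span_le.mpr ?_)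
    (himage ▸ hXc.isClosedMap _ (isClosed_topologicalClosure _))
  rintro _ ⟨w, rfl, z, hz, rfl⟩
  rw [hXc.isClosed_range.closure_eq] at hz
  obtain ⟨ξ, rfl⟩ := hz
  exact ⟨wordOp L w ξ, wordOp_mem_fockTail hL w ξ, (wordOp_apply_of_intertwine hX w ξ).symm⟩

theorem stmt_8_general {H K : Type*} [NormedAddCommGroup H] [InnerProductSpace ℂ H]
    [NormedAddCommGroup K] [InnerProductSpace ℂ K] [CompleteSpace K]
    {n : ℕ} (S : Fin n → H →L[ℂ] H)
    (e : HilbertBasis (FreeMonoid (Fin n)) ℂ K)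
    (L : Fin n → K →L[ℂ] K)
    (hL : ∀ i (w : FreeMonoid (Fin n)), L i (e w) = e (FreeMonoid.of i * w))
    (X : K →L[ℂ] H) (hX : ∀ i, S i ∘L X = X ∘L L i)
    (c : ℝ) (hc : 0 < c) (hbb : ∀ ξ : K, c * ‖ξ‖ ≤ ‖X ξ‖) :
    (⋂ (k : ℕ) (_ : 1 ≤ k),
      ((Submodule.span ℂ {y : H | ∃ w : FreeMonoid (Fin n), w.length = k ∧
          ∃ z ∈ closure (Set.range X), y = wordOp S w z}).topologicalClosure : Set H))
      = {0} := by
  have hXc := isClosedEmbedding_of_bounded_below hc hbb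
  have hsub := closure_span_wordOp_subset_image (S := S) hL hX hXc
  refine Set.eq_singleton_iff_unique_mem.mpr ⟨?_, fun x hx => ?_⟩
  · simp only [Set.mem_iInter]
    exact fun k _ => zero_mem _
  simp only [Set.mem_iInter] at hx
  obtain ⟨ξ, -, rfl⟩ := hsub 1 (hx 1 le_rfl)
  suffices ξ = 0 by simp [this]
  refine eq_zero_of_forall_mem_fockTail e fun k hk => ?_
  obtain ⟨η, hη, hXη⟩ := hsub k (hx k hk)
  rwa [← hXc.injective hXη]

/-- Let `S₁,…,Sₙ` be isometries on `H` with pairwise orthogonal ranges, and let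
`X : ℓ²(𝔽ₙ⁺) → H` be a bounded operator with `SᵢX = XLᵢ`, where `Lᵢ` are the left creation
operators on the Fock space `ℓ²(𝔽ₙ⁺)` (modelled by a Hilbert basis indexed by the free
monoid).  If `X` is bounded below, then
`⋂_{k ≥ 1} Σ_{|w| = k} S_w (Ran X)⁻ = {0}`, i.e. the Cuntz part of the restriction of the
`Sᵢ` to the closure of `Ran X` vanishes. -/
theorem stmt_8 {H K : Type*} [NormedAddCommGroup H] [InnerProductSpace ℂ H] [CompleteSpace H]
    [NormedAddCommGroup K] [InnerProductSpace ℂ K] [CompleteSpace K]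
    {n : ℕ} (S : Fin n → H →L[ℂ] H)
    (hiso : ∀ i (x : H), ‖S i x‖ = ‖x‖)
    (horth : ∀ i j, i ≠ j → ∀ x y : H, (inner ℂ (S i x) (S j y) : ℂ) = 0)
    (e : HilbertBasis (FreeMonoid (Fin n)) ℂ K)
    (L : Fin n → K →L[ℂ] K)
    (hL : ∀ i (w : FreeMonoid (Fin n)), L i (e w) = e (FreeMonoid.of i * w))
    (X : K →L[ℂ] H) (hX : ∀ i, S i ∘L X = X ∘L L i)
    (c : ℝ) (hc : 0 < c) (hbb : ∀ ξ : K, c * ‖ξ‖ ≤ ‖X ξ‖) :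
    (⋂ (k : ℕ) (_ : 1 ≤ k),
      ((Submodule.span ℂ {y : H | ∃ w : FreeMonoid (Fin n), w.length = k ∧
          ∃ z ∈ closure (Set.range X), y = wordOp S w z}).topologicalClosure : Set H))
      = {0} :=
  stmt_8_general S e L hL X hX c hc hbb
end
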